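/- For every integer n ≥ 1, T_n(x) = M_n(x²) + ∑_{k=0}^{n−1} C(n,k) M_k(x²) (x−1)^{n−k} (x+1)^{n−k−1}, where C(n,k) is the binomial coefficient, as an identity of polynomials. -/

import Mathlib

/-!
Multiplying by `x + 1` turns the recurrence `T_{n+1} = (x - x³) T_n' + (x + 2n x²) T_n` into
`S_{n+1} = φ_{2n+1} S_n` for `S_n = (x + 1) T_n`, where `φ_c f = (x - x³) f' + c x² f`. Under
`y = x²`, `φ_c` acts on even polynomials `g(x²)` as `θ_c g = 2y(1 - y) g' + c y g` and on odd ones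
`x g(x²)` as `g ↦ θ_{c-1} g + g`. Reversing the recurrence of `N_n` gives `M_{n+1} = θ_{2n} M_n + M_n`,
so the odd part of `S_n` is `x M_n(x²)`. Since
`θ_{2n+1}(M_k (y - 1)^{n-k}) = (y - 1)^{n-k} (M_{k+1} + (y - 1) M_k)`, Pascal's rule shows that the
even part is `B_n(x²)` with `B_n = ∑_k C(n,k) M_k (y - 1)^{n-k}`. Multiplied by `x + 1`, the
right-hand side of the identity is exactly `x M_n(x²) + B_n(x²)`, and `x + 1` is not a zero divisor.
-/

/-- The numbers T(n,k) defined by T(1,1) = 1, T(1,k) = 0 for k ≠ 1, and the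
recurrence T(n+1,k) = k·T(n,k) + T(n,k-1) + (2n-k+2)·T(n,k-2) for n ≥ 1.
(The value at n = 0 encodes T_0(x) = 1.) -/
def Tc : ℕ → ℤ → ℤ
  | 0, k => if k = 0 then 1 else 0
  | 1, k => if k = 1 then 1 else 0
  | (n+2), k => k * Tc (n+1) k + Tc (n+1) (k-1) + (2*((n : ℤ)+1) - k + 2) * Tc (n+1) (k-2)

/-- The polynomial T_n(x) = ∑_(k=1)^(2n-1) T(n,k) x^k for n ≥ 1, with T_0(x) = 1. -/
noncomputable def Tpoly (n : ℕ) : Polynomial ℤ :=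
  if n = 0 then 1 else ∑ k ∈ Finset.Icc 1 (2*n - 1), Polynomial.C (Tc n k) * Polynomial.X ^ k

/-- The polynomials N_n(x) defined by N_0(x) = 1 and
N_(n+1)(x) = (2n+1)x·N_n(x) + 2x(1-x)·N_n'(x). -/
noncomputable def Npoly : ℕ → Polynomial ℤ
  | 0 => 1
  | (n+1) => Polynomial.C (2*(n : ℤ)+1) * Polynomial.X * Npoly n
      + 2 * Polynomial.X * (1 - Polynomial.X) * Polynomial.derivative (Npoly n)

/-- The reciprocal polynomial M_n(x) = x^n N_n(1/x) = ∑_(k=1)^(n) N(n,k) x^(n-k)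
for n ≥ 1, with M_0(x) = 1; here N(n,k) is the coefficient of x^k in N_n(x). -/
noncomputable def Mpoly (n : ℕ) : Polynomial ℤ :=
  if n = 0 then 1
  else ∑ k ∈ Finset.Icc 1 n, Polynomial.C ((Npoly n).coeff k) * Polynomial.X ^ (n-k)

open Polynomial Finset

section Operators

variable {R : Type*} [CommRing R]

noncomputable def thetaOp (c : R) : R[X] →ₗ[R] R[X] :=
  LinearMap.mulLeft R (2 * X * (1 - X)) ∘ₗ derivative + LinearMap.mulLeft R (C c * X)

noncomputable def phiOp (c : R) : R[X] →ₗ[R] R[X] :=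
  LinearMap.mulLeft R (X - X ^ 3) ∘ₗ derivative + LinearMap.mulLeft R (C c * X ^ 2)

theorem thetaOp_apply (c : R) (p : R[X]) :
    thetaOp c p = 2 * X * (1 - X) * derivative p + C c * X * p := rfl

theorem phiOp_apply (c : R) (p : R[X]) :
    phiOp c p = (X - X ^ 3) * derivative p + C c * X ^ 2 * p := rfl

theorem coeff_X_mul_derivative (p : R[X]) (i : ℕ) : (X * derivative p).coeff i = i * p.coeff i := by
  rcases i with _ | i
  · simp
  · rw [coeff_X_mul, coeff_derivative, mul_comm]
    push_cast
    rfl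

theorem thetaOp_add_one (c : R) (p : R[X]) : thetaOp (c + 1) p = thetaOp c p + X * p := by
  simp only [thetaOp_apply, map_add, map_one]
  ring

theorem thetaOp_mul_X_sub_one_pow (c : R) (p : R[X]) (j : ℕ) :
    thetaOp (c + 2 * j) (p * (X - 1) ^ j) = (X - 1) ^ j * thetaOp c p := by
  rcases j with _ | j
  · simp
  · simp only [thetaOp_apply, derivative_mul, derivative_pow, derivative_sub, derivative_X,
      derivative_one, map_add, map_mul, map_natCast, map_ofNat]
    push_cast
    ring

theorem phiOp_comp_X_sq (c : R) (q : R[X]) :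
    phiOp c (q.comp (X ^ 2)) = (thetaOp c q).comp (X ^ 2) := by
  simp only [phiOp_apply, thetaOp_apply, derivative_comp, derivative_X_sq, add_comp, mul_comp,
    sub_comp, X_comp, C_comp, one_comp, ofNat_comp, map_ofNat]
  ring

theorem phiOp_X_mul_comp_X_sq (c : R) (p : R[X]) :
    phiOp (c + 1) (X * p.comp (X ^ 2)) = X * (thetaOp c p + p).comp (X ^ 2) := by
  simp only [phiOp_apply, thetaOp_apply, derivative_mul, derivative_X, derivative_comp,
    derivative_X_sq, add_comp, mul_comp, sub_comp, X_comp, C_comp, one_comp, ofNat_comp,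
    map_add, map_one, map_ofNat]
  ring

end Operators

theorem Tc_succ (n : ℕ) (k : ℤ) :
    Tc (n + 1) k = k * Tc n k + Tc n (k - 1) + (2 * n - k + 2) * Tc n (k - 2) := by
  rcases n with _ | n
  · simp only [Tc]
    split_ifs <;> omega
  · simp only [Tc]
    push_cast
    ring

theorem Tc_of_neg {k : ℤ} (hk : k < 0) (n : ℕ) : Tc n k = 0 := by
  induction n generalizing k with
  | zero => simp only [Tc]; omega
  | succ n ih => rw [Tc_succ, ih hk, ih (by omega), ih (by omega)]; ring

theorem Tc_succ_zero (n : ℕ) : Tc (n + 1) 0 = 0 := by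
  rw [Tc_succ, Tc_of_neg (k := 0 - 1) (by omega), Tc_of_neg (k := 0 - 2) (by omega)]
  ring

theorem Tc_succ_of_le {n : ℕ} {k : ℤ} (hk : 2 * (n + 1) ≤ k) : Tc (n + 1) k = 0 := by
  induction n generalizing k with
  | zero => simp only [Tc]; omega
  | succ n ih =>
    rw [Tc_succ, ih (by push_cast at hk ⊢; omega), ih (by push_cast at hk ⊢; omega),
      ih (by push_cast at hk ⊢; omega)]
    ring

theorem Tpoly_coeff (n j : ℕ) : (Tpoly n).coeff j = Tc n j := by
  rcases n with _ | n
  · simp [Tpoly, Tc, coeff_one]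
  · simp only [Tpoly, Nat.add_one_ne_zero, if_false, finsetSum_coeff, coeff_C_mul_X_pow]
    rw [sum_ite_eq]
    split_ifs with hj
    · rfl
    · rw [mem_Icc] at hj
      rcases Nat.eq_zero_or_pos j with rfl | hj0
      · exact (Tc_succ_zero n).symm
      · exact (Tc_succ_of_le (by omega)).symm

theorem coeff_X_pow_mul_Tpoly (n k j : ℕ) : (X ^ k * Tpoly n).coeff j = Tc n (j - k) := by
  rw [coeff_X_pow_mul']
  split_ifs with h
  · rw [Tpoly_coeff]; push_cast [h]; rfl
  · exact (Tc_of_neg (by omega) n).symm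

theorem coeff_X_pow_mul_derivative_Tpoly (n k j : ℕ) :
    (X ^ k * derivative (Tpoly n)).coeff j = (j - k + 1) * Tc n (j - k + 1) := by
  rw [coeff_X_pow_mul']
  split_ifs with h
  · rw [coeff_derivative, Tpoly_coeff]; push_cast [h]; ring
  · rcases (show (j : ℤ) - k + 1 = 0 ∨ (j : ℤ) - k + 1 < 0 by omega) with h0 | hneg
    · rw [h0, zero_mul]
    · rw [Tc_of_neg hneg, mul_zero]

theorem Tpoly_succ (n : ℕ) :
    Tpoly (n + 1) = (X - X ^ 3) * derivative (Tpoly n) + (X + C (2 * n : ℤ) * X ^ 2) * Tpoly n := by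
  ext j
  have hsplit : (X - X ^ 3) * derivative (Tpoly n) + (X + C (2 * n : ℤ) * X ^ 2) * Tpoly n
      = X ^ 1 * derivative (Tpoly n) - X ^ 3 * derivative (Tpoly n) + X ^ 1 * Tpoly n
        + C (2 * n : ℤ) * (X ^ 2 * Tpoly n) := by ring
  rw [hsplit, Tpoly_coeff, Tc_succ]
  simp only [coeff_add, coeff_sub, coeff_C_mul, coeff_X_pow_mul_Tpoly,
    coeff_X_pow_mul_derivative_Tpoly]
  push_cast
  ring_nf

theorem Npoly_succ_coeff_zero (n : ℕ) : (Npoly (n + 1)).coeff 0 = 0 := by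
  simp [Npoly, mul_assoc, mul_comm X]

theorem Npoly_coeff_succ (n j : ℕ) :
    (Npoly (n + 1)).coeff (j + 1)
      = (2 * n + 1 - 2 * j) * (Npoly n).coeff j + 2 * (j + 1) * (Npoly n).coeff (j + 1) := by
  have hsplit : Npoly (n + 1) = X * (C (2 * n + 1 : ℤ) * Npoly n + C 2 * derivative (Npoly n))
      - C 2 * (X ^ 2 * derivative (Npoly n)) := by
    simp only [Npoly, map_ofNat]; ring
  rw [hsplit, coeff_sub, coeff_X_mul, coeff_add, coeff_C_mul, coeff_C_mul, coeff_C_mul,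
    coeff_X_pow_mul', coeff_derivative]
  rcases j with _ | j
  · simp
  · rw [if_pos (by omega), show j + 1 + 1 - 2 = j from rfl, coeff_derivative]
    push_cast
    ring

theorem Npoly_coeff_of_lt {n j : ℕ} (h : n < j) : (Npoly n).coeff j = 0 := by
  induction n generalizing j with
  | zero => simp [Npoly, coeff_one]; omega
  | succ n ih =>
    obtain ⟨j, rfl⟩ : ∃ i, j = i + 1 := ⟨j - 1, by omega⟩
    rw [Npoly_coeff_succ, ih (by omega), ih (by omega)]
    ring

theorem Mpoly_coeff (n i : ℕ) :
    (Mpoly n).coeff i = if i ≤ n then (Npoly n).coeff (n - i) else 0 := by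
  rcases n with _ | n
  · simp [Mpoly, Npoly, coeff_one]
  · simp only [Mpoly, Nat.add_one_ne_zero, if_false, finsetSum_coeff, coeff_C_mul_X_pow]
    split_ifs with hi
    · rw [sum_eq_single (n + 1 - i)]
      · rw [if_pos (by omega)]
      · intro k hk hki
        rw [mem_Icc] at hk
        rw [if_neg (by omega)]
      · intro hout
        rw [mem_Icc] at hout
        rw [show n + 1 - i = 0 by omega, Npoly_succ_coeff_zero, ite_self]
    · exact sum_eq_zero fun k _ => if_neg (by omega)

theorem Mpoly_succ (n : ℕ) : Mpoly (n + 1) = thetaOp (2 * n : ℤ) (Mpoly n) + Mpoly n := by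
  have hsplit : thetaOp (2 * n : ℤ) (Mpoly n) + Mpoly n
      = Mpoly n + X * (C (2 * n : ℤ) * Mpoly n - C 2 * (X * derivative (Mpoly n)))
        + C 2 * (X * derivative (Mpoly n)) := by
    simp only [thetaOp_apply, map_ofNat]; ring
  ext i
  rw [hsplit, coeff_add, coeff_add, coeff_C_mul, coeff_X_mul_derivative]
  rcases i with _ | i
  · rw [coeff_X_mul_zero, Mpoly_coeff, Mpoly_coeff, if_pos (by omega), if_pos (by omega),
      Nat.sub_zero, Nat.sub_zero, Npoly_coeff_succ, Npoly_coeff_of_lt (Nat.lt_succ_self n)]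
    ring
  · rw [coeff_X_mul, coeff_sub, coeff_C_mul, coeff_C_mul, coeff_X_mul_derivative, Mpoly_coeff, Mpoly_coeff,
      Mpoly_coeff]
    rcases lt_trichotomy i n with hi | rfl | hi
    · obtain ⟨m, rfl⟩ := Nat.exists_eq_add_of_lt hi
      rw [if_pos (by omega), if_pos (by omega), if_pos (by omega),
        show i + m + 1 + 1 - (i + 1) = m + 1 by omega, Npoly_coeff_succ,
        show i + m + 1 - (i + 1) = m by omega, show i + m + 1 - i = m + 1 by omega]
      push_cast
      ring
    · rw [if_pos le_rfl, if_neg (by omega), Nat.sub_self, Npoly_succ_coeff_zero]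
      push_cast
      ring
    · rw [if_neg (by omega), if_neg (by omega), if_neg (by omega)]
      ring

noncomputable def Bpoly (n : ℕ) : ℤ[X] :=
  ∑ k ∈ range (n + 1), (n.choose k : ℤ[X]) * (Mpoly k * (X - 1) ^ (n - k))

theorem thetaOp_Mpoly (k : ℕ) :
    thetaOp (2 * k + 1 : ℤ) (Mpoly k) = Mpoly (k + 1) + (X - 1) * Mpoly k := by
  rw [thetaOp_add_one, Mpoly_succ]
  ring

theorem Bpoly_succ (n : ℕ) : Bpoly (n + 1) = thetaOp (2 * n + 1 : ℤ) (Bpoly n) := by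
  rw [Bpoly, Bpoly, sum_choose_succ_mul (fun i j => Mpoly i * (X - 1) ^ j), map_sum,
    ← sum_add_distrib]
  refine sum_congr rfl fun i hi => ?_
  have hin : i ≤ n := Nat.lt_succ_iff.mp (mem_range.mp hi)
  have hc : (2 * n + 1 : ℤ) = 2 * i + 1 + 2 * (n - i : ℕ) := by push_cast [hin]; ring
  conv_rhs => rw [← nsmul_eq_mul, map_nsmul, nsmul_eq_mul]
  rw [hc, thetaOp_mul_X_sub_one_pow, thetaOp_Mpoly,
    show n + 1 - i = n - i + 1 by omega]
  ring

theorem X_add_one_mul_Tpoly_succ (n : ℕ) :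
    (X + 1) * Tpoly (n + 1) = phiOp (2 * n + 1 : ℤ) ((X + 1) * Tpoly n) := by
  rw [Tpoly_succ, phiOp_apply, derivative_mul]
  simp only [derivative_X, derivative_one, map_add, map_one]
  ring

theorem X_add_one_mul_Tpoly (n : ℕ) :
    (X + 1) * Tpoly n = X * (Mpoly n).comp (X ^ 2) + (Bpoly n).comp (X ^ 2) := by
  induction n with
  | zero => simp [Tpoly, Mpoly, Bpoly]
  | succ n ih =>
    rw [X_add_one_mul_Tpoly_succ, ih, map_add, phiOp_X_mul_comp_X_sq, phiOp_comp_X_sq,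
      ← Mpoly_succ, ← Bpoly_succ]

theorem X_add_one_mul_binomial_sum (n : ℕ) :
    (X + 1) * ((Mpoly n).comp (X ^ 2) + ∑ k ∈ range n,
        C (n.choose k : ℤ) * (Mpoly k).comp (X ^ 2) * (X - 1) ^ (n - k) * (X + 1) ^ (n - k - 1))
      = X * (Mpoly n).comp (X ^ 2) + (Bpoly n).comp (X ^ 2) := by
  have hterm : ∀ k ∈ range n,
      (X + 1) * (C (n.choose k : ℤ) * (Mpoly k).comp (X ^ 2) * (X - 1) ^ (n - k)
        * (X + 1) ^ (n - k - 1))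
      = (n.choose k : ℤ[X]) * ((Mpoly k).comp (X ^ 2) * (X ^ 2 - 1) ^ (n - k)) := by
    intro k hk
    obtain ⟨j, hj⟩ : ∃ j, n - k = j + 1 := ⟨n - k - 1, by have := mem_range.mp hk; omega⟩
    rw [hj, Nat.add_sub_cancel, show (X ^ 2 - 1 : ℤ[X]) = (X - 1) * (X + 1) by ring, mul_pow,
      map_natCast]
    ring
  have hB : (Bpoly n).comp (X ^ 2) = ∑ k ∈ range n,
      (n.choose k : ℤ[X]) * ((Mpoly k).comp (X ^ 2) * (X ^ 2 - 1) ^ (n - k)) + (Mpoly n).comp (X ^ 2) := by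
    simp [Bpoly, Polynomial.sum_comp, sum_range_succ]
  rw [mul_add, mul_sum, sum_congr rfl hterm, hB]
  ring

theorem stmt13_general (n : ℕ) :
    Tpoly n = (Mpoly n).comp (Polynomial.X ^ 2)
      + ∑ k ∈ Finset.range n,
          Polynomial.C ((n.choose k : ℤ)) * (Mpoly k).comp (Polynomial.X ^ 2)
            * (Polynomial.X - 1) ^ (n-k) * (Polynomial.X + 1) ^ (n-k-1) := by
  refine mul_left_cancel₀ (X_add_C_ne_zero 1) ?_
  rw [C_1, X_add_one_mul_Tpoly, X_add_one_mul_binomial_sum]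

/-- For n ≥ 1,
T_n(x) = M_n(x²) + ∑_(k=0)^(n-1) C(n,k) M_k(x²) (x-1)^(n-k) (x+1)^(n-k-1). -/
theorem stmt13 (n : ℕ) (hn : 1 ≤ n) :
    Tpoly n = (Mpoly n).comp (Polynomial.X ^ 2)
      + ∑ k ∈ Finset.range n,
          Polynomial.C ((n.choose k : ℤ)) * (Mpoly k).comp (Polynomial.X ^ 2)
            * (Polynomial.X - 1) ^ (n-k) * (Polynomial.X + 1) ^ (n-k-1) :=
  stmt13_general n
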